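/- arXiv:1009.2131 — 2 statements merged into one kernel-verified Lean document; each statement's English description precedes it below -/
import Mathlib

section
/- Let H = [[a,b],[c,d]] be a 2×2 unitary matrix with abcd ≠ 0, let Ĥ(k) = (e^{ik} e_R e_R† + e^{−ik} e_L e_L†)H, let e^{iφ_±(k)} be the eigenvalues of Ĥ(k), and let h(k) = ∂φ_+(k)/∂k (so that ∂φ_−(k)/∂k = −h(k)). Then ∫_0^{2π} h(k)² dk/(2π) = 1 − √(1 − |a|²). -/
open MeasureTheory Filter Real Topology

noncomputable section

/-- Spatial Fourier transform `Ĥ(k) = (e^{ik} e_R e_R† + e^{−ik} e_L e_L†)H` of the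
one-step evolution of the DTQW with quantum coin `H`. -/
def Hhat (H : Matrix (Fin 2) (Fin 2) ℂ) (k : ℝ) : Matrix (Fin 2) (Fin 2) ℂ :=
  Matrix.of fun i j =>
    (if i = 0 then Complex.exp (-(Complex.I * k)) else Complex.exp (Complex.I * k)) * H i j

lemma aux_deriv (r s : ℝ) (hs2 : s^2 = 1 - r^2) (hs0 : 0 < s) (hs1 : s ≤ 1) (θ : ℝ) :
    HasDerivAt (fun t => (1-s)*t - s * Real.arctan ((1-s)*Real.sin t*Real.cos t/(s*(Real.cos t)^2 + (Real.sin t)^2)))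
      ((r^2 - r^2 * Real.cos (2*θ))/(2 - r^2 - r^2*Real.cos (2*θ))) θ := by
  set x := Real.sin θ with hx
  set y := Real.cos θ with hy
  have hxy : x^2 + y^2 = 1 := by rw [hx, hy]; exact sin_sq_add_cos_sq θ
  have hg : 0 < s*y^2 + x^2 := by nlinarith [sq_nonneg x, sq_nonneg y]
  have hgx : 0 < x^2 + s^2*y^2 := by nlinarith [sq_nonneg x, sq_nonneg y, sq_nonneg (s*y)]
  have hn : HasDerivAt (fun t => (1-s)*Real.sin t*Real.cos t)
      ((1-s)*(y^2 - x^2)) θ := by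
    have := (((Real.hasDerivAt_sin θ).const_mul (1-s)).mul (Real.hasDerivAt_cos θ))
    exact this.congr_deriv (by rw [← hx, ← hy]; ring)
  have hgd : HasDerivAt (fun t => s*(Real.cos t)^2 + (Real.sin t)^2)
      (2*(1-s)*x*y) θ := by
    have h1 := (((Real.hasDerivAt_cos θ).pow 2).const_mul s).add ((Real.hasDerivAt_sin θ).pow 2)
    exact h1.congr_deriv (by rw [← hx, ← hy]; ring)
  have hQ : HasDerivAt (fun t => (1-s)*Real.sin t*Real.cos t/(s*(Real.cos t)^2 + (Real.sin t)^2))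
      (((1-s)*(y^2-x^2)*(s*y^2+x^2) - (1-s)*x*y*(2*(1-s)*x*y))/(s*y^2+x^2)^2) θ := by
    have := hn.div hgd (by positivity)
    exact this
  have hA := hQ.arctan
  have hF := ((hasDerivAt_id θ).const_mul (1-s)).sub (hA.const_mul s)
  refine hF.congr_deriv (Eq.symm ?_)
  have hc2 : Real.cos (2*θ) = 2*y^2 - 1 := by rw [Real.cos_two_mul, ← hy]
  rw [hc2]
  have e1 : (1-s)*(y^2-x^2)*(s*y^2+x^2) - (1-s)*x*y*(2*(1-s)*x*y) = (1-s)*(s*y^2-x^2) := by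
    linear_combination (1-s)*(s*y^2-x^2)*hxy
  have e2 : (s*y^2+x^2)^2 + ((1-s)*x*y)^2 = x^2+s^2*y^2 := by
    linear_combination (x^2+s^2*y^2)*hxy
  have h1Q : 1 + ((1-s)*x*y/(s*y^2+x^2))^2 = (x^2+s^2*y^2)/(s*y^2+x^2)^2 := by
    rw [div_pow, ← e2]
    field_simp
  rw [e1, h1Q]
  have hden : 2 - r^2 - r^2*(2*y^2-1) > 0 := by nlinarith [sq_nonneg (r*y), sq_nonneg x]
  rw [one_div_div]
  have e3 : (s*y^2+x^2)^2/(x^2+s^2*y^2) * ((1-s)*(s*y^2-x^2)/(s*y^2+x^2)^2)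
      = (1-s)*(s*y^2-x^2)/(x^2+s^2*y^2) := by
    field_simp
  rw [e3]
  have e4 : (1-s)*1 - s*((1-s)*(s*y^2-x^2)/(x^2+s^2*y^2))
      = ((1-s)*(x^2+s^2*y^2) - s*((1-s)*(s*y^2-x^2)))/(x^2+s^2*y^2) := by
    field_simp
  rw [e4, div_eq_div_iff hden.ne' hgx.ne']
  linear_combination (2*r^2*y^2*(r^2-1))*hxy + (2*r^2*y^2*(1-y^2) + 2*x^2 - 2*r^2*x^2*y^2)*hs2

/-- For the DTQW with a 2×2 unitary coin `H = [[a,b],[c,d]]`, `abcd ≠ 0`, with eigenvalue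
phases `φ_±(k)` of `Ĥ(k)` chosen as smooth branches with `φ_−' = −φ_+'`, and
`h(k) = φ_+'(k)`, one has `∫_0^{2π} h(k)² dk/(2π) = 1 − √(1 − |a|²)`. -/
theorem dtqw_group_velocity_second_moment
    (H : Matrix (Fin 2) (Fin 2) ℂ) (hH : H ∈ Matrix.unitaryGroup (Fin 2) ℂ)
    (habcd : H 0 0 * H 0 1 * H 1 0 * H 1 1 ≠ 0)
    (φp φm : ℝ → ℝ)
    (hφp : Differentiable ℝ φp) (hφm : Differentiable ℝ φm)
    (hbranch : ∀ k, deriv φm k = - deriv φp k)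
    (heig : ∀ (k : ℝ) (lam : ℂ),
      Matrix.det (Hhat H k - lam • (1 : Matrix (Fin 2) (Fin 2) ℂ))
        = (Complex.exp (Complex.I * φp k) - lam) * (Complex.exp (Complex.I * φm k) - lam)) :
    (1 / (2 * π)) * ∫ k in (0 : ℝ)..(2 * π), (deriv φp k) ^ 2
      = 1 - Real.sqrt (1 - ‖H 0 0‖ ^ 2) := by
  have ha0 : H 0 0 ≠ 0 := fun h => habcd (by rw [h]; ring)
  have hb0 : H 0 1 ≠ 0 := fun h => habcd (by rw [h]; ring)
  have hsm : star H * H = 1 := (Unitary.mem_iff.mp hH).1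
  have hms : H * star H = 1 := (Unitary.mem_iff.mp hH).2
  have e1 := congrArg (fun M => M 0 0) hsm
  have e2 := congrArg (fun M => M 0 1) hsm
  have e3 := congrArg (fun M => M 0 0) hms
  simp [Matrix.mul_apply, Fin.sum_univ_two, Matrix.one_apply,
    Matrix.star_eq_conjTranspose, Matrix.conjTranspose_apply] at e1 e2 e3
  set Dc : ℂ := H 0 0 * H 1 1 - H 0 1 * H 1 0 with hDc
  have hdd : (starRingEnd ℂ) Dc * Dc = 1 := by
    have h0 := congrArg Matrix.det hsm
    rw [Matrix.det_mul, Matrix.det_one, Matrix.star_eq_conjTranspose,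
      Matrix.det_conjTranspose, Matrix.det_fin_two H] at h0
    exact h0
  set r : ℝ := ‖H 0 0‖ with hr
  have hr0 : 0 < r := norm_pos_iff.mpr ha0
  have hr1 : r < 1 := by
    have hb : 0 < Complex.normSq (H 0 1) := Complex.normSq_pos.mpr hb0
    have h0 : Complex.normSq (H 0 0) + Complex.normSq (H 0 1) = 1 := by
      have := e3
      rw [Complex.mul_conj, Complex.mul_conj] at this
      exact_mod_cast this
    have h1 : r^2 = Complex.normSq (H 0 0) := Complex.sq_norm _
    nlinarith
  have hna : H 0 0 * (starRingEnd ℂ) (H 0 0) = ((r:ℝ):ℂ)^2 := by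
    rw [Complex.mul_conj]
    norm_cast
    rw [hr, Complex.sq_norm]
  have hd2 : H 1 1 = (starRingEnd ℂ) (H 0 0) * Dc := by
    rw [hDc]
    linear_combination (-(H 1 1))*e1 + (H 1 0)*e2
  -- determinant computation
  have hPM : ∀ k : ℝ, Complex.exp (Complex.I*(k:ℂ)) * Complex.exp (-(Complex.I*(k:ℂ))) = 1 := by
    intro k; rw [← Complex.exp_add]; simp
  have hdet : ∀ (k : ℝ) (lam : ℂ),
      Matrix.det (Hhat H k - lam • (1 : Matrix (Fin 2) (Fin 2) ℂ))
        = lam^2 - (H 0 0 * Complex.exp (-(Complex.I * k)) + H 1 1 * Complex.exp (Complex.I * k)) * lam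
          + Dc := by
    intro k lam
    simp [Hhat, Matrix.det_fin_two, Matrix.sub_apply, Matrix.smul_apply, Matrix.one_apply, hDc]
    linear_combination (H 0 0 * H 1 1 - H 0 1 * H 1 0) * hPM k
  have hS : ∀ k : ℝ, Complex.exp (Complex.I * (φp k : ℂ)) + Complex.exp (Complex.I * (φm k : ℂ))
      = H 0 0 * Complex.exp (-(Complex.I * (k:ℂ))) + H 1 1 * Complex.exp (Complex.I * (k:ℂ)) := by
    intro k
    have t1 := (hdet k 1).symm.trans (heig k 1)
    have t2 := (hdet k (-1)).symm.trans (heig k (-1))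
    linear_combination (t1 - t2)/2
  have hP : ∀ k : ℝ, Complex.exp (Complex.I * (φp k : ℂ)) * Complex.exp (Complex.I * (φm k : ℂ)) = Dc := by
    intro k
    have t0 := (hdet k 0).symm.trans (heig k 0)
    linear_combination -t0
  -- derivative of the trace identity
  have hSfun : (fun k : ℝ => Complex.exp (Complex.I * (φp k : ℂ)) + Complex.exp (Complex.I * (φm k : ℂ)))
      = fun k : ℝ => H 0 0 * Complex.exp (-(Complex.I * (k:ℂ))) + H 1 1 * Complex.exp (Complex.I * (k:ℂ)) :=
    funext hS
  have hderiv : ∀ k : ℝ, ((deriv φp k : ℝ) : ℂ) *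
      (Complex.exp (Complex.I * (φp k : ℂ)) - Complex.exp (Complex.I * (φm k : ℂ)))
      = H 1 1 * Complex.exp (Complex.I * (k:ℂ)) - H 0 0 * Complex.exp (-(Complex.I * (k:ℂ))) := by
    intro k
    have hp := (((hφp k).hasDerivAt.ofReal_comp.const_mul Complex.I).cexp)
    have hm := (((hφm k).hasDerivAt.ofReal_comp.const_mul Complex.I).cexp)
    have hlhs := hp.add hm
    change HasDerivAt (fun k : ℝ => Complex.exp (Complex.I * (φp k : ℂ)) + Complex.exp (Complex.I * (φm k : ℂ))) _ k at hlhs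
    rw [hSfun] at hlhs
    have h1 : HasDerivAt (fun t : ℝ => ((t : ℂ))) 1 k := (hasDerivAt_id k).ofReal_comp
    have hrhs := (((h1.const_mul Complex.I).neg).cexp.const_mul (H 0 0)).add
      (((h1.const_mul Complex.I)).cexp.const_mul (H 1 1))
    have huniq := hlhs.unique hrhs
    rw [hbranch k] at huniq
    push_cast at huniq
    linear_combination (-Complex.I) * huniq + (((deriv φp k : ℝ) : ℂ) * Complex.exp (Complex.I * (φp k : ℂ))
      - ((deriv φp k : ℝ) : ℂ) * Complex.exp (Complex.I * (φm k : ℂ))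
      + H 0 0 * Complex.exp (-(Complex.I * (k:ℂ))) - H 1 1 * Complex.exp (Complex.I * (k:ℂ))) * Complex.I_sq
  -- pointwise formula for h(k)^2
  set β : ℝ := (Dc * ((starRingEnd ℂ) (H 0 0))^2).arg with hβ
  have habsD : ‖Dc‖ = 1 := by
    have h2 : Complex.normSq Dc = 1 := by
      have h3 := hdd
      rw [mul_comm, Complex.mul_conj] at h3
      exact_mod_cast h3
    rw [Complex.norm_def, h2, Real.sqrt_one]
  have hDc0 : Dc ≠ 0 := by
    intro h
    rw [h] at habsD; simp at habsD
  have hE0 : Dc * ((starRingEnd ℂ) (H 0 0))^2 = ((r^2 : ℝ) : ℂ) * Complex.exp ((β:ℂ) * Complex.I) := by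
    have habs : ‖Dc * ((starRingEnd ℂ) (H 0 0))^2‖ = r^2 := by
      rw [norm_mul, norm_pow, habsD, Complex.norm_conj, one_mul, hr]
    conv_lhs => rw [← Complex.norm_mul_exp_arg_mul_I (Dc * ((starRingEnd ℂ) (H 0 0))^2)]
    rw [habs, ← hβ]
  have key : ∀ k : ℝ, (deriv φp k)^2
      = (r^2 - r^2*Real.cos (2*k+β))/(2 - r^2 - r^2*Real.cos (2*k+β)) := by
    intro k
    have hsq := congrArg (fun z => z^2) (hderiv k)
    have eq1 : ((deriv φp k : ℝ) : ℂ)^2 *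
        ((H 0 0 * Complex.exp (-(Complex.I * (k:ℂ))) + H 1 1 * Complex.exp (Complex.I * (k:ℂ)))^2 - 4*Dc)
        = (H 1 1 * Complex.exp (Complex.I * (k:ℂ)) - H 0 0 * Complex.exp (-(Complex.I * (k:ℂ))))^2 := by
      linear_combination hsq + (((deriv φp k : ℝ) : ℂ)^2 *
        (-(H 0 0 * Complex.exp (-(Complex.I * (k:ℂ))) + H 1 1 * Complex.exp (Complex.I * (k:ℂ)))
          - Complex.exp (Complex.I * (φp k : ℂ)) - Complex.exp (Complex.I * (φm k : ℂ)))) * hS k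
        + 4*((deriv φp k : ℝ) : ℂ)^2 * hP k
    -- rewrite both sides via W
    have eq2 : (H 0 0 * Complex.exp (-(Complex.I * (k:ℂ))) + H 1 1 * Complex.exp (Complex.I * (k:ℂ)))^2 - 4*Dc
        = Dc * (Dc * ((starRingEnd ℂ) (H 0 0))^2 * Complex.exp (Complex.I * (k:ℂ))^2
            + (starRingEnd ℂ) Dc * (H 0 0)^2 * Complex.exp (-(Complex.I * (k:ℂ)))^2
            + 2*((r:ℝ):ℂ)^2 - 4) := by
      linear_combination ((H 1 1 + Dc*(starRingEnd ℂ) (H 0 0))*Complex.exp (Complex.I * (k:ℂ))^2 + 2*(H 0 0))*hd2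
        + (-((H 0 0)^2*Complex.exp (-(Complex.I * (k:ℂ)))^2))*hdd + 2*Dc*hna + 2*(H 0 0)*(H 1 1)*hPM k
    have eq3 : (H 1 1 * Complex.exp (Complex.I * (k:ℂ)) - H 0 0 * Complex.exp (-(Complex.I * (k:ℂ))))^2
        = Dc * (Dc * ((starRingEnd ℂ) (H 0 0))^2 * Complex.exp (Complex.I * (k:ℂ))^2
            + (starRingEnd ℂ) Dc * (H 0 0)^2 * Complex.exp (-(Complex.I * (k:ℂ)))^2
            - 2*((r:ℝ):ℂ)^2) := by
      linear_combination ((H 1 1 + Dc*(starRingEnd ℂ) (H 0 0))*Complex.exp (Complex.I * (k:ℂ))^2 - 2*(H 0 0))*hd2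
        + (-((H 0 0)^2*Complex.exp (-(Complex.I * (k:ℂ)))^2))*hdd - 2*Dc*hna - 2*(H 0 0)*(H 1 1)*hPM k
    have hWre : Dc * ((starRingEnd ℂ) (H 0 0))^2 * Complex.exp (Complex.I * (k:ℂ))^2
        + (starRingEnd ℂ) Dc * (H 0 0)^2 * Complex.exp (-(Complex.I * (k:ℂ)))^2
        = 2 * ((r^2 * Real.cos (2*k+β) : ℝ) : ℂ) := by
      have hconj : (starRingEnd ℂ) Dc * (H 0 0)^2 * Complex.exp (-(Complex.I * (k:ℂ)))^2
          = (starRingEnd ℂ) (Dc * ((starRingEnd ℂ) (H 0 0))^2 * Complex.exp (Complex.I * (k:ℂ))^2) := by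
        rw [map_mul, map_mul, map_pow, map_pow, Complex.conj_conj, ← Complex.exp_conj]
        simp [Complex.conj_ofReal]
      rw [hconj, Complex.add_conj]
      have hcomb : Complex.exp ((β:ℂ)*Complex.I) * Complex.exp (Complex.I * (k:ℂ))^2
          = Complex.exp ((↑(2*k+β))*Complex.I) := by
        rw [sq, ← Complex.exp_add, ← Complex.exp_add]
        congr 1
        push_cast
        ring
      rw [hE0, mul_assoc, hcomb, Complex.re_ofReal_mul, Complex.exp_ofReal_mul_I_re]
      push_cast
      ring
    have ceq : ((deriv φp k : ℝ) : ℂ)^2 * (2 * ((r^2 * Real.cos (2*k+β) : ℝ) : ℂ) + 2*((r:ℝ):ℂ)^2 - 4)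
        = 2 * ((r^2 * Real.cos (2*k+β) : ℝ) : ℂ) - 2*((r:ℝ):ℂ)^2 := by
      have h4 : ((deriv φp k : ℝ) : ℂ)^2 * (Dc * (Dc * ((starRingEnd ℂ) (H 0 0))^2 * Complex.exp (Complex.I * (k:ℂ))^2
            + (starRingEnd ℂ) Dc * (H 0 0)^2 * Complex.exp (-(Complex.I * (k:ℂ)))^2 + 2*((r:ℝ):ℂ)^2 - 4))
          = Dc * (Dc * ((starRingEnd ℂ) (H 0 0))^2 * Complex.exp (Complex.I * (k:ℂ))^2
            + (starRingEnd ℂ) Dc * (H 0 0)^2 * Complex.exp (-(Complex.I * (k:ℂ)))^2 - 2*((r:ℝ):ℂ)^2) := by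
        rw [← eq2, ← eq3]; exact eq1
      rw [hWre] at h4
      apply mul_left_cancel₀ hDc0
      linear_combination h4
    have rEq : (deriv φp k)^2 * (2*(r^2*Real.cos (2*k+β)) + 2*r^2 - 4)
        = 2*(r^2*Real.cos (2*k+β)) - 2*r^2 := by
      exact_mod_cast ceq
    have hden : 0 < 2 - r^2 - r^2*Real.cos (2*k+β) := by
      nlinarith [Real.neg_one_le_cos (2*k+β), Real.cos_le_one (2*k+β)]
    rw [eq_div_iff hden.ne']
    linear_combination (-(1:ℝ)/2)*rEq
  -- the integral
  set s : ℝ := Real.sqrt (1 - r^2) with hs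
  have hs2 : s^2 = 1 - r^2 := Real.sq_sqrt (by nlinarith)
  have hs0 : 0 < s := Real.sqrt_pos.mpr (by nlinarith)
  have hs1 : s ≤ 1 := by
    nlinarith [hs2, hs0, sq_nonneg r]
  have hcont : Continuous (fun k : ℝ => (r^2 - r^2*Real.cos (2*k+β))/(2 - r^2 - r^2*Real.cos (2*k+β))) := by
    apply Continuous.div
    · fun_prop
    · fun_prop
    · intro k
      have : 0 < 2 - r^2 - r^2*Real.cos (2*k+β) := by
        nlinarith [Real.neg_one_le_cos (2*k+β), Real.cos_le_one (2*k+β)]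
      exact this.ne'
  have hint : ∫ k in (0:ℝ)..(2*π), (deriv φp k)^2 = 2*π*(1-s) := by
    rw [intervalIntegral.integral_congr (g := fun k : ℝ =>
        (r^2 - r^2*Real.cos (2*k+β))/(2 - r^2 - r^2*Real.cos (2*k+β))) (fun k _ => key k)]
    have hder : ∀ k ∈ Set.uIcc (0:ℝ) (2*π),
        HasDerivAt (fun t : ℝ => (1-s)*(t+β/2) - s * Real.arctan ((1-s)*Real.sin (t+β/2)*Real.cos (t+β/2)/(s*(Real.cos (t+β/2))^2 + (Real.sin (t+β/2))^2)))
          ((r^2 - r^2*Real.cos (2*k+β))/(2 - r^2 - r^2*Real.cos (2*k+β))) k := by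
      intro k _
      have h0 := (aux_deriv r s hs2 hs0 hs1 (k+β/2)).comp k ((hasDerivAt_id k).add_const (β/2))
      have h1 : 2*(k+β/2) = 2*k+β := by ring
      rw [h1] at h0
      exact h0.congr_deriv (mul_one _)
    rw [intervalIntegral.integral_eq_sub_of_hasDerivAt hder (hcont.intervalIntegrable 0 (2*π))]
    have hper1 : (2*π + β/2) = (β/2 + 2*π) := by ring
    rw [hper1, Real.sin_add_two_pi, Real.cos_add_two_pi]
    have h02 : (0:ℝ) + β/2 = β/2 := by ring
    rw [h02]
    ring
  rw [hint]
  have hnorm : ‖H 0 0‖ = r := rfl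
  field_simp
end
end

section
/- Let X^(La)_m be the lazy random walk on ℤ with final time n and parameter r(n), and suppose n·r(n)² → 0 as n → ∞. Then for each fixed x ∈ ℤ, P(X^(La)_n = x) − e^{−n r(n)} I_x(n r(n)) → 0 as n → ∞; that is, the distribution of the lazy random walk at the final time is asymptotically that of the continuous-time random walk at continuous time t = n r(n). -/
open MeasureTheory Filter Real Topology

noncomputable section

/-- Distribution `p_m(x)` of the lazy random walk on ℤ with movement probability `ρ`:
`p_m(x) = (1−ρ)p_{m−1}(x) + (ρ/2)(p_{m−1}(x−1) + p_{m−1}(x+1))`, `p_0(x) = δ_0(x)`. -/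
def lazyDist (ρ : ℝ) : ℕ → ℤ → ℝ
  | 0 => fun x => if x = 0 then 1 else 0
  | m + 1 => fun x =>
      (1 - ρ) * lazyDist ρ m x + (ρ / 2) * (lazyDist ρ m (x - 1) + lazyDist ρ m (x + 1))

/-- Modified Bessel function of integer order `n` (integral representation). -/
def besselI (n : ℤ) (t : ℝ) : ℝ :=
  (1 / π) * ∫ θ in (0 : ℝ)..π, Real.exp (t * Real.cos θ) * Real.cos (n * θ)

namespace LazyRWAux

lemma cont_integrand (ρ : ℝ) (m : ℕ) (x : ℤ) :
    Continuous (fun θ : ℝ => (1 - ρ * (1 - Real.cos θ)) ^ m * Real.cos ((x : ℝ) * θ)) := by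
  fun_prop

lemma integral_cos_int (x : ℤ) (hx : x ≠ 0) :
    ∫ θ in (0 : ℝ)..π, Real.cos ((x : ℝ) * θ) = 0 := by
  have hx' : (x : ℝ) ≠ 0 := Int.cast_ne_zero.mpr hx
  rw [intervalIntegral.integral_comp_mul_left (fun θ => Real.cos θ) hx']
  simp [Real.sin_int_mul_pi]

lemma lazyDist_eq (ρ : ℝ) (m : ℕ) (x : ℤ) :
    lazyDist ρ m x =
      (1 / π) * ∫ θ in (0 : ℝ)..π, (1 - ρ * (1 - Real.cos θ)) ^ m * Real.cos ((x : ℝ) * θ) := by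
  induction m generalizing x with
  | zero =>
    simp only [lazyDist, pow_zero, one_mul]
    by_cases hx : x = 0
    · simp [hx]
    · simp [hx, integral_cos_int x hx]
  | succ m ih =>
    have key : ∀ θ : ℝ, (1 - ρ * (1 - Real.cos θ)) ^ (m + 1) * Real.cos ((x : ℝ) * θ)
        = (1 - ρ) * ((1 - ρ * (1 - Real.cos θ)) ^ m * Real.cos ((x : ℝ) * θ))
          + (ρ / 2) * ((1 - ρ * (1 - Real.cos θ)) ^ m * Real.cos (((x - 1 : ℤ) : ℝ) * θ)
              + (1 - ρ * (1 - Real.cos θ)) ^ m * Real.cos (((x + 1 : ℤ) : ℝ) * θ)) := by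
      intro θ
      have h1 : (((x - 1 : ℤ) : ℝ) * θ) = (x : ℝ) * θ - θ := by push_cast; ring
      have h2 : (((x + 1 : ℤ) : ℝ) * θ) = (x : ℝ) * θ + θ := by push_cast; ring
      rw [h1, h2, Real.cos_sub, Real.cos_add, pow_succ]
      ring
    have hiA := ((cont_integrand ρ m x).intervalIntegrable (μ := volume) (0 : ℝ) π)
    have hiB := ((cont_integrand ρ m (x - 1)).intervalIntegrable (μ := volume) (0 : ℝ) π)
    have hiC := ((cont_integrand ρ m (x + 1)).intervalIntegrable (μ := volume) (0 : ℝ) π)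
    show (1 - ρ) * lazyDist ρ m x + (ρ / 2) * (lazyDist ρ m (x - 1) + lazyDist ρ m (x + 1)) = _
    rw [ih x, ih (x - 1), ih (x + 1)]
    have : (∫ θ in (0 : ℝ)..π, (1 - ρ * (1 - Real.cos θ)) ^ (m + 1) * Real.cos ((x : ℝ) * θ))
        = (1 - ρ) * (∫ θ in (0 : ℝ)..π,
              (1 - ρ * (1 - Real.cos θ)) ^ m * Real.cos ((x : ℝ) * θ))
          + (ρ / 2) * ((∫ θ in (0 : ℝ)..π,
                (1 - ρ * (1 - Real.cos θ)) ^ m * Real.cos (((x - 1 : ℤ) : ℝ) * θ))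
              + ∫ θ in (0 : ℝ)..π,
                (1 - ρ * (1 - Real.cos θ)) ^ m * Real.cos (((x + 1 : ℤ) : ℝ) * θ)) := by
      rw [← intervalIntegral.integral_add hiB hiC,
        ← intervalIntegral.integral_const_mul,
        ← intervalIntegral.integral_const_mul,
        ← intervalIntegral.integral_add]
      · exact intervalIntegral.integral_congr fun θ _ => key θ
      · exact hiA.const_mul _
      · exact (hiB.add hiC).const_mul _
    rw [this]
    ring

lemma bessel_eq (t : ℝ) (x : ℤ) :
    Real.exp (-t) * besselI x t
      = (1 / π) * ∫ θ in (0 : ℝ)..π,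
          Real.exp (t * (Real.cos θ - 1)) * Real.cos ((x : ℝ) * θ) := by
  have : ∀ θ : ℝ, Real.exp (t * (Real.cos θ - 1)) * Real.cos ((x : ℝ) * θ)
      = Real.exp (-t) * (Real.exp (t * Real.cos θ) * Real.cos ((x : ℝ) * θ)) := by
    intro θ
    rw [mul_sub, mul_one, sub_eq_add_neg, Real.exp_add]
    ring
  simp_rw [this]
  rw [intervalIntegral.integral_const_mul, besselI]
  ring

lemma pow_sub_pow_abs {x y : ℝ} (hx : |x| ≤ 1) (hy : |y| ≤ 1) (n : ℕ) :
    |x ^ n - y ^ n| ≤ n * |x - y| := by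
  induction n with
  | zero => simp
  | succ n ih =>
    have hsplit : x ^ (n + 1) - y ^ (n + 1) = x * (x ^ n - y ^ n) + (x - y) * y ^ n := by ring
    have h1 : |x * (x ^ n - y ^ n)| ≤ |x ^ n - y ^ n| := by
      rw [abs_mul]
      exact mul_le_of_le_one_left (abs_nonneg _) hx
    have h2 : |(x - y) * y ^ n| ≤ |x - y| := by
      rw [abs_mul]
      refine mul_le_of_le_one_right (abs_nonneg _) ?_
      rw [abs_pow]
      exact pow_le_one₀ (abs_nonneg y) hy
    calc |x ^ (n + 1) - y ^ (n + 1)| ≤ |x * (x ^ n - y ^ n)| + |(x - y) * y ^ n| := by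
          rw [hsplit]; exact abs_add_le _ _
      _ ≤ n * |x - y| + |x - y| := add_le_add (h1.trans ih) h2
      _ = (n + 1 : ℕ) * |x - y| := by push_cast; ring

lemma key_ineq {a : ℝ} (ha0 : 0 ≤ a) (ha2 : a ≤ 2) (n : ℕ) :
    |(1 - a) ^ n - Real.exp (-((n : ℝ) * a))| ≤ n * a ^ 2 := by
  have h1 : |(1 : ℝ) - a| ≤ 1 := abs_le.mpr ⟨by linarith, by linarith⟩
  have hle1 : Real.exp (-a) ≤ 1 := Real.exp_le_one_iff.mpr (by linarith)
  have h2 : |Real.exp (-a)| ≤ 1 := by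
    rw [abs_of_pos (Real.exp_pos _)]; exact hle1
  have hge : 1 - a ≤ Real.exp (-a) := by
    have := Real.add_one_le_exp (-a); linarith
  have hdiff : |(1 - a) - Real.exp (-a)| ≤ a ^ 2 := by
    rw [abs_sub_comm, abs_of_nonneg (by linarith)]
    rcases le_or_gt a 1 with hcase | hcase
    · have habs : |(-a : ℝ)| ≤ 1 := by rw [abs_neg, abs_of_nonneg ha0]; exact hcase
      have := Real.abs_exp_sub_one_sub_id_le habs
      rw [neg_sq] at this
      have := abs_le.mp this
      linarith [this.2]
    · nlinarith
  have hexp : Real.exp (-((n : ℝ) * a)) = (Real.exp (-a)) ^ n := by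
    rw [← Real.exp_nat_mul]; ring_nf
  rw [hexp]
  calc |(1 - a) ^ n - Real.exp (-a) ^ n| ≤ n * |(1 - a) - Real.exp (-a)| :=
      pow_sub_pow_abs h1 h2 n
    _ ≤ n * a ^ 2 := mul_le_mul_of_nonneg_left hdiff (Nat.cast_nonneg n)

end LazyRWAux

/-- If `n·r(n)² → 0`, then for each fixed `x ∈ ℤ`,
`P(X^(La)_n = x) − e^{−n r(n)} I_x(n r(n)) → 0` as `n → ∞`: the lazy random walk at the
final time is asymptotically the continuous-time random walk at time `t = n r(n)`. -/
theorem lazy_rw_to_ctrw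
    (r : ℕ → ℝ) (hr : ∀ n, r n ∈ Set.Ioo (0 : ℝ) 1)
    (h : Tendsto (fun n : ℕ => (n : ℝ) * r n ^ 2) atTop (𝓝 0)) :
    ∀ x : ℤ, Tendsto
      (fun n : ℕ => lazyDist (r n) n x
        - Real.exp (-((n : ℝ) * r n)) * besselI x ((n : ℝ) * r n))
      atTop (𝓝 0) := by
  intro x
  apply squeeze_zero_norm (a := fun n : ℕ => 4 * ((n : ℝ) * r n ^ 2))
  · intro n
    set ρ := r n with hρdef
    obtain ⟨hρ0, hρ1⟩ := hr n
    have hInt1 := ((LazyRWAux.cont_integrand ρ n x).intervalIntegrable (μ := volume) (0 : ℝ) π)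
    have hInt2 : IntervalIntegrable
        (fun θ : ℝ => Real.exp (((n : ℝ) * ρ) * (Real.cos θ - 1)) * Real.cos ((x : ℝ) * θ))
        volume 0 π := by
      exact Continuous.intervalIntegrable (μ := volume) (by fun_prop) 0 π
    rw [LazyRWAux.lazyDist_eq ρ n x, LazyRWAux.bessel_eq ((n : ℝ) * ρ) x, ← mul_sub,
      ← intervalIntegral.integral_sub hInt1 hInt2]
    have hbound : ∀ θ ∈ Set.uIoc (0 : ℝ) π,
        ‖(1 - ρ * (1 - Real.cos θ)) ^ n * Real.cos ((x : ℝ) * θ)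
          - Real.exp (((n : ℝ) * ρ) * (Real.cos θ - 1)) * Real.cos ((x : ℝ) * θ)‖
          ≤ 4 * ((n : ℝ) * ρ ^ 2) := by
      intro θ _
      set a : ℝ := ρ * (1 - Real.cos θ) with hadef
      have hc1 : Real.cos θ ≤ 1 := Real.cos_le_one θ
      have hc2 : -1 ≤ Real.cos θ := Real.neg_one_le_cos θ
      have ha0 : 0 ≤ a := mul_nonneg hρ0.le (by linarith)
      have ha2ρ : a ≤ 2 * ρ := by
        rw [hadef]; nlinarith
      have ha2 : a ≤ 2 := by nlinarith
      have hexp : ((n : ℝ) * ρ) * (Real.cos θ - 1) = -((n : ℝ) * a) := by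
        rw [hadef]; ring
      rw [hexp, ← sub_mul]
      have hkey := LazyRWAux.key_ineq ha0 ha2 n
      have hcos : |Real.cos ((x : ℝ) * θ)| ≤ 1 := Real.abs_cos_le_one _
      have ha_sq : a ^ 2 ≤ 4 * ρ ^ 2 := by nlinarith
      calc ‖((1 - a) ^ n - Real.exp (-((n : ℝ) * a))) * Real.cos ((x : ℝ) * θ)‖
          = |(1 - a) ^ n - Real.exp (-((n : ℝ) * a))| * |Real.cos ((x : ℝ) * θ)| := abs_mul _ _
        _ ≤ ((n : ℝ) * a ^ 2) * 1 := by
            apply mul_le_mul hkey hcos (abs_nonneg _)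
            positivity
        _ ≤ 4 * ((n : ℝ) * ρ ^ 2) := by
            rw [mul_one]
            nlinarith [Nat.cast_nonneg (α := ℝ) n]
    have hnormint := intervalIntegral.norm_integral_le_of_norm_le_const hbound
    rw [norm_mul]
    have hπ : ‖(1 : ℝ) / π‖ = 1 / π := by
      rw [Real.norm_eq_abs, abs_of_pos (by positivity : (0:ℝ) < 1 / π)]
    rw [hπ]
    have hb : |π - 0| = π := by rw [sub_zero, abs_of_pos Real.pi_pos]
    rw [hb] at hnormint
    calc (1 / π) * ‖_‖ ≤ (1 / π) * (4 * ((n : ℝ) * ρ ^ 2) * π) := by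
          apply mul_le_mul_of_nonneg_left hnormint (by positivity)
      _ = 4 * ((n : ℝ) * ρ ^ 2) := by
          field_simp
    -- done
  · simpa using h.const_mul 4
end
end
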